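/- arXiv:2204.13401 — 2 statements merged into one kernel-verified Lean document; each statement's English description precedes it below -/
import Mathlib

section
/- For a bounded lattice L, in the dual filter space of L, the join (smallest filter of filters) of the clopen filters θ(a) and θ(b) equals θ(a ∨ b), i.e., θ(a) ⋎ θ(b) = θ(a ∨ b). -/
/-- A filter of a meet-semilattice: an upward-closed subset closed under binary
meets. -/
def IsFilt {X : Type*} [SemilatticeInf X] (s : Set X) : Prop :=
  (∀ x y : X, x ∈ s → x ≤ y → y ∈ s) ∧ ∀ x y : X, x ∈ s → y ∈ s → x ⊓ y ∈ s

variable (L : Type*) [Lattice L] [BoundedOrder L]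

/-- The points of the dual space of the bounded lattice `L`: its proper
nonempty filters. -/
def Pt : Type _ := {x : Set L // IsFilt x ∧ x.Nonempty ∧ ⊥ ∉ x}

/-- The basic sets `θ a = {x : a ∈ x}`. -/
def theta (a : L) : Set (Pt L) := {x : Pt L | a ∈ x.1}

/-- A filter of the dual space (points ordered by inclusion, meet given by
intersection): a set of points upward-closed under inclusion and closed under
intersection. -/
def IsFiltPt (F : Set (Pt L)) : Prop :=
  (∀ x y : Pt L, x ∈ F → x.1 ⊆ y.1 → y ∈ F) ∧
  (∀ x y : Pt L, x ∈ F → y ∈ F → ∀ z : Pt L, z.1 = x.1 ∩ y.1 → z ∈ F)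

/-- The join of two filters of the dual space: the smallest filter of the
space containing both. -/
def ptJoin (A B : Set (Pt L)) : Set (Pt L) :=
  ⋂₀ {C : Set (Pt L) | IsFiltPt L C ∧ A ⊆ C ∧ B ⊆ C}

/-- The principal filter `↑c` as a point, for `c ≠ ⊥`. -/
def upPt (c : L) (hc : c ≠ ⊥) : Pt L :=
  ⟨{z | c ≤ z},
    ⟨fun _ _ hx hxy => le_trans hx hxy, fun _ _ hx hy => le_inf hx hy⟩,
    ⟨c, le_refl c⟩,
    fun h => hc (le_bot_iff.mp h)⟩

theorem isFiltPt_theta (c : L) : IsFiltPt L (theta L c) :=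
  ⟨fun _ _ hx hxy => hxy hx,
   fun x y hx hy z hz => by
     show c ∈ z.1
     rw [hz]; exact ⟨hx, hy⟩⟩

/-- In the dual filter space of a bounded lattice `L`, the join of the clopen
filters `θ a` and `θ b` is `θ (a ⊔ b)`. -/
theorem theta_join (a b : L) :
    ptJoin L (theta L a) (theta L b) = theta L (a ⊔ b) := by
  apply Set.Subset.antisymm
  · intro x hx
    exact hx _ ⟨isFiltPt_theta L (a ⊔ b),
      fun y hy => y.2.1.1 a _ hy le_sup_left,
      fun y hy => y.2.1.1 b _ hy le_sup_right⟩
  · intro x hx C hC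
    obtain ⟨⟨Cup, Cint⟩, hA, hB⟩ := hC
    by_cases ha : a = ⊥
    · have hb : b ∈ x.1 := by
        have : a ⊔ b = b := by simp [ha]
        rwa [this] at hx
      exact hB hb
    · by_cases hb : b = ⊥
      · have ha' : a ∈ x.1 := by
          have : a ⊔ b = a := by simp [hb]
          rwa [this] at hx
        exact hA ha'
      · have hab : a ⊔ b ≠ ⊥ := fun h => ha (le_bot_iff.mp (le_sup_left.trans h.le))
        have hz : (upPt L (a ⊔ b) hab) ∈ C := by
          apply Cint (upPt L a ha) (upPt L b hb)
          · exact hA (le_refl a)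
          · exact hB (le_refl b)
          · ext z
            exact ⟨fun h => ⟨le_sup_left.trans h, le_sup_right.trans h⟩,
                   fun ⟨h1, h2⟩ => sup_le h1 h2⟩
        exact Cup _ x hz (fun z hz' => x.2.1.1 _ _ hx hz')
end

section
/- For a bounded lattice L, the poset of nonempty filters of L ordered by reverse inclusion is a complete lattice, and it is isomorphic (as a complete lattice) to the lattice of closed filters of the dual L-space of L via the map p ↦ {x : p ⊆ x}. -/
variable (L : Type*) [Lattice L] [BoundedOrder L]

/-- The nonempty filters of `L`, to be ordered by reverse inclusion (the
filter completion of `L`). -/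
def FL : Type _ := {p : Set L // IsFilt p ∧ p.Nonempty}

/-- Reverse inclusion order on nonempty filters. -/
instance : PartialOrder (FL L) where
  le p q := q.1 ⊆ p.1
  le_refl p := subset_rfl
  le_trans p q r h1 h2 := Set.Subset.trans h2 h1
  le_antisymm p q h1 h2 := Subtype.ext (subset_antisymm h2 h1)

/-- The Stone-type topology on the dual space of `L`. -/
def ptTop : TopologicalSpace (Pt L) :=
  TopologicalSpace.generateFrom
    ({s | ∃ a : L, s = theta L a} ∪ {s | ∃ a : L, s = (theta L a)ᶜ})

/-!
The map `p ↦ {x : p ⊆ x}` reflects inclusion because a nonempty filter `p` is either all of `L`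
or itself a point. For surjectivity, a closed filter `c` of points is the image of the
intersection `T` of its members: the members of `c`, directed downwards by intersection,
converge to `T` in the subbasic topology, so `T ∈ c` by closedness.
-/

open Filter Set Topology

section IsFilt

variable {X : Type*} [SemilatticeInf X]

lemma IsFilt.inter {s t : Set X} (hs : IsFilt s) (ht : IsFilt t) : IsFilt (s ∩ t) :=
  ⟨fun x y hx hxy => ⟨hs.1 x y hx.1 hxy, ht.1 x y hx.2 hxy⟩,
    fun x y hx hy => ⟨hs.2 x y hx.1 hy.1, ht.2 x y hx.2 hy.2⟩⟩

lemma IsFilt.biInter {ι : Type*} {S : Set ι} {f : ι → Set X} (h : ∀ i ∈ S, IsFilt (f i)) :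
    IsFilt (⋂ i ∈ S, f i) := by
  refine ⟨fun x y hx hxy => ?_, fun x y hx hy => ?_⟩ <;> simp only [mem_iInter₂] at *
  · exact fun i hi => (h i hi).1 x y (hx i hi) hxy
  · exact fun i hi => (h i hi).2 x y (hx i hi) (hy i hi)

lemma IsFilt.top_mem [OrderTop X] {s : Set X} (hs : IsFilt s) (hne : s.Nonempty) : ⊤ ∈ s :=
  hne.elim fun x hx => hs.1 x ⊤ hx le_top

end IsFilt

section DualSpace

variable {L}

attribute [local instance] ptTop

def FL.sInter (S : Set (FL L)) : FL L :=
  ⟨⋂ p ∈ S, p.1, IsFilt.biInter fun p _ => p.2.1,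
    ⊤, mem_iInter₂.2 fun p _ => p.2.1.top_mem p.2.2⟩

lemma FL.isLUB_sInter (S : Set (FL L)) : IsLUB S (FL.sInter S) :=
  ⟨fun _ hp => biInter_subset_of_mem hp, fun _ hq => subset_iInter₂ fun _ hp => hq hp⟩

def FL.toPt (p : FL L) (h : (⊥ : L) ∉ p.1) : Pt L := ⟨p.1, p.2.1, p.2.2, h⟩

def FL.interPts (c : Set (Pt L)) : FL L :=
  ⟨⋂ z ∈ c, z.1, IsFilt.biInter fun z _ => z.2.1,
    ⊤, mem_iInter₂.2 fun z _ => z.2.1.top_mem z.2.2.1⟩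

def Pt.inf (x y : Pt L) : Pt L :=
  ⟨x.1 ∩ y.1, x.2.1.inter y.2.1, ⟨⊤, x.2.1.top_mem x.2.2.1, y.2.1.top_mem y.2.2.1⟩,
    fun h => x.2.2.2 h.1⟩

def ptsContaining (s : Set L) : Set (Pt L) := {x | s ⊆ x.1}

lemma ptsContaining_eq_biInter_theta (s : Set L) : ptsContaining s = ⋂ a ∈ s, theta L a := by
  ext x
  simp only [ptsContaining, theta, mem_ofPred_eq, mem_iInter₂, subset_def]

lemma isClosed_theta (a : L) : IsClosed (theta L a) :=
  ⟨TopologicalSpace.GenerateOpen.basic _ (Or.inr ⟨a, rfl⟩)⟩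

lemma isClosed_ptsContaining (s : Set L) : IsClosed (ptsContaining s) := by
  rw [ptsContaining_eq_biInter_theta]
  exact isClosed_biInter fun a _ => isClosed_theta a

lemma isFiltPt_ptsContaining (s : Set L) : IsFiltPt L (ptsContaining s) :=
  ⟨fun _ _ hx hxy => hx.trans hxy,
    fun _ _ hx hy z hz => show _ ⊆ z.1 by rw [hz]; exact subset_inter hx hy⟩

lemma ptsContaining_subset_iff {p q : FL L} :
    ptsContaining p.1 ⊆ ptsContaining q.1 ↔ q.1 ⊆ p.1 := by
  refine ⟨fun h => ?_, fun h _ hx => h.trans hx⟩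
  by_cases hp : (⊥ : L) ∈ p.1
  · exact fun a _ => p.2.1.1 ⊥ a hp bot_le
  · exact h (a := p.toPt hp) (subset_refl p.1)

def tailFilter (c : Set (Pt L)) : Filter (Pt L) := ⨅ z : c, 𝓟 {w | w ∈ c ∧ w.1 ⊆ z.1.1}

lemma IsFiltPt.tailFilter_neBot {c : Set (Pt L)} (hf : IsFiltPt L c) (hne : c.Nonempty) :
    (tailFilter c).NeBot := by
  have : Nonempty c := hne.to_subtype
  refine iInf_neBot_of_directed' (fun z w => ?_)
    fun z => principal_neBot_iff.2 ⟨z, z.2, subset_rfl⟩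
  refine ⟨⟨z.1.inf w.1, hf.2 _ _ z.2 w.2 _ rfl⟩, ?_, ?_⟩ <;>
    refine principal_mono.2 fun v hv => ⟨hv.1, ?_⟩
  exacts [hv.2.trans inter_subset_left, hv.2.trans inter_subset_right]

lemma self_mem_tailFilter {c : Set (Pt L)} (hne : c.Nonempty) : c ∈ tailFilter c :=
  mem_iInf_of_mem ⟨_, hne.some_mem⟩ fun _ hw => hw.1

lemma tendsto_tailFilter {c : Set (Pt L)} (hne : c.Nonempty) (h : (⊥ : L) ∉ (FL.interPts c).1) :
    Tendsto id (tailFilter c) (𝓝 ((FL.interPts c).toPt h)) := by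
  refine TopologicalSpace.tendsto_nhds_generateFrom_iff.2 ?_
  rintro s (⟨a, rfl⟩ | ⟨a, rfl⟩) ha
  · exact mem_iInf_of_mem ⟨_, hne.some_mem⟩ fun w hw => mem_iInter₂.1 ha w hw.1
  · have ha' : a ∉ ⋂ z ∈ c, z.1 := ha
    obtain ⟨w, hw, haw⟩ : ∃ w ∈ c, a ∉ w.1 := by simpa using ha'
    exact mem_iInf_of_mem ⟨w, hw⟩ fun v hv hav => haw (hv.2 hav)

lemma FL.toPt_interPts_mem {c : Set (Pt L)} (hf : IsFiltPt L c) (hc : IsClosed c)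
    (h : (⊥ : L) ∉ (FL.interPts c).1) : (FL.interPts c).toPt h ∈ c := by
  have hne : c.Nonempty := nonempty_iff_ne_empty.2 fun hc => h (by simp [FL.interPts, hc])
  have := hf.tailFilter_neBot hne
  exact hc.mem_of_tendsto (tendsto_tailFilter hne h) (self_mem_tailFilter hne)

lemma ptsContaining_interPts {c : Set (Pt L)} (hf : IsFiltPt L c) (hc : IsClosed c) :
    ptsContaining (FL.interPts c).1 = c := by
  refine subset_antisymm (fun x hx => ?_) fun x hx => biInter_subset_of_mem hx
  have h : (⊥ : L) ∉ (FL.interPts c).1 := fun hb => x.2.2.2 (hx hb)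
  exact hf.1 _ x (FL.toPt_interPts_mem hf hc h) hx

end DualSpace

/-- The poset of nonempty filters of a bounded lattice `L` under reverse
inclusion is a complete lattice, and the map `p ↦ {x : p ⊆ x}` is an order
isomorphism (hence an isomorphism of complete lattices) onto the lattice of
closed filters of the dual L-space of `L`. -/
theorem filter_completion_iso_closed_filters :
    (∀ S : Set (FL L), ∃ m : FL L, IsGLB S m) ∧
    (∀ S : Set (FL L), ∃ m : FL L, IsLUB S m) ∧
    ∃ e : FL L ≃ {c : Set (Pt L) // IsFiltPt L c ∧ @IsClosed _ (ptTop L) c},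
      (∀ p : FL L, (e p).1 = {x : Pt L | p.1 ⊆ x.1}) ∧
      (∀ p q : FL L, p ≤ q ↔ (e p).1 ⊆ (e q).1) := by
  refine ⟨fun S => ⟨_, isLUB_lowerBounds.1 (FL.isLUB_sInter _)⟩,
    fun S => ⟨_, FL.isLUB_sInter S⟩, ?_⟩
  let e : FL L → {c : Set (Pt L) // IsFiltPt L c ∧ @IsClosed _ (ptTop L) c} :=
    fun p => ⟨ptsContaining p.1, isFiltPt_ptsContaining _, isClosed_ptsContaining _⟩
  have he : ∀ p q : FL L, p ≤ q ↔ (e p).1 ⊆ (e q).1 :=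
    fun _ _ => ptsContaining_subset_iff.symm
  have he_inj : Function.Injective e := fun p q h =>
    le_antisymm ((he p q).2 (congrArg Subtype.val h).le) ((he q p).2 (congrArg Subtype.val h).ge)
  have he_surj : Function.Surjective e := fun c =>
    ⟨FL.interPts c.1, Subtype.ext (ptsContaining_interPts c.2.1 c.2.2)⟩
  exact ⟨Equiv.ofBijective e ⟨he_inj, he_surj⟩, fun _ => rfl, he⟩
end
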